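/- arXiv:1503.08047 — 3 statements merged into one kernel-verified Lean document; each statement's English description precedes it below -/
import Mathlib

section
/- Let φ = (1+√5)/2 be the golden ratio and n a positive integer. Suppose n = Σ_{k=-R}^{L} ε_k φ^k is the greedy φ-expansion of n with digits ε_k ∈ {0,1}, no two consecutive digits equal to 1, ε_L = 1, and ε_{-R} = 1 (R being the length of the fractional part, with R = 0 if the expansion has no fractional part of that form). Then R = L if L is even and R = L + 1 if L is odd. -/
/-!
Conjugation `φ ↦ ψ = -φ⁻¹` is a ring automorphism of `ℤ[φ]` fixing `n`, so also
`n = ∑ ε_k ψ^k`. A 0/1 digit string without adjacent ones satisfies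
`∑_{k ≤ M} ε_k φ^k < φ^(M+1)`; hence `φ^L ≤ n < φ^(L+1)`, and, as `|ψ^k| = φ^(-k)`, the
part of the conjugate sum over `k ≥ m` has absolute value below `φ^(1-m)`. In the conjugate
expansion the lowest term `ψ^(-R) = (-φ)^R` therefore dominates: the next digit vanishes
and the rest is smaller than `φ^(R-1)`, so `n ≥ 0` forces `R` to be even, and then
`φ^(R-1) < n < φ^(R+1)`. Comparing with `φ^L ≤ n < φ^(L+1)` gives `L ≤ R ≤ L + 1`, and
the parity of `R` decides.
-/

/-- The golden ratio. -/
noncomputable def goldenφ : ℝ := (1 + Real.sqrt 5) / 2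

open Finset Real goldenRatio

theorem sum_range_digit_mul_pow_lt {x : ℝ} (hx : 1 < x) (hx2 : x + 1 ≤ x ^ 2) {δ : ℕ → ℕ}
    (hdig : ∀ k, δ k ≤ 1) (hnocons : ∀ k, ¬(δ k = 1 ∧ δ (k + 1) = 1)) (N : ℕ) :
    ∑ k ∈ range N, (δ k : ℝ) * x ^ k < x ^ N := by
  induction N using Nat.strong_induction_on with
  | _ N ih =>
  rcases N with _ | N
  · simp
  rw [sum_range_succ]
  rcases Nat.le_one_iff_eq_zero_or_eq_one.mp (hdig N) with h0 | h1
  · have := ih N N.lt_succ_self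
    have := pow_lt_pow_right₀ hx (by omega : N < N + 1)
    simp only [h0, Nat.cast_zero, zero_mul, add_zero]
    linarith
  rcases N with _ | N
  · simpa [h1] using hx
  have h0 : δ N = 0 := by have := hdig N; have := hnocons N; omega
  calc ∑ k ∈ range (N + 1), (δ k : ℝ) * x ^ k + δ (N + 1) * x ^ (N + 1)
      = ∑ k ∈ range N, (δ k : ℝ) * x ^ k + x ^ (N + 1) := by simp [sum_range_succ, h0, h1]
    _ < x ^ N + x ^ (N + 1) := by linarith [ih N (by omega)]
    _ = x ^ N * (x + 1) := by ring
    _ ≤ x ^ N * x ^ 2 := mul_le_mul_of_nonneg_left hx2 (pow_nonneg (by linarith) N)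
    _ = x ^ (N + 1 + 1) := by ring

theorem sum_Icc_digit_mul_zpow_lt {x : ℝ} (hx : 1 < x) (hx2 : x + 1 ≤ x ^ 2) {ε : ℤ → ℕ}
    (hdig : ∀ k, ε k ≤ 1) (hnocons : ∀ k, ¬(ε k = 1 ∧ ε (k + 1) = 1)) (m M : ℤ) :
    ∑ k ∈ Icc m M, (ε k : ℝ) * x ^ k < x ^ (M + 1) := by
  have hx0 : 0 < x := by linarith
  rcases lt_or_ge M m with hM | hm
  · rw [Icc_eq_empty_of_lt hM, sum_empty]
    exact zpow_pos hx0 _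
  obtain ⟨N, hN⟩ : ∃ N : ℕ, M + 1 - m = N := ⟨(M + 1 - m).toNat, by omega⟩
  have key := sum_range_digit_mul_pow_lt hx hx2 (δ := fun j => ε (m + j)) (fun j => hdig _)
    (fun j => by simpa only [Nat.cast_succ, add_assoc] using hnocons (m + j)) N
  calc ∑ k ∈ Icc m M, (ε k : ℝ) * x ^ k
      = x ^ m * ∑ j ∈ range N, (ε (m + j) : ℝ) * x ^ j := by
        simp [Int.Icc_eq_finset_map, hN, mul_sum, zpow_add₀ hx0.ne', mul_left_comm]
    _ < x ^ m * x ^ N := mul_lt_mul_of_pos_left key (zpow_pos hx0 m)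
    _ = x ^ (M + 1) := by rw [← zpow_natCast, ← zpow_add₀ hx0.ne', ← hN, add_sub_cancel]

theorem sum_Icc_digit_mul_zpow_neg_lt {x : ℝ} (hx : 1 < x) (hx2 : x + 1 ≤ x ^ 2) {ε : ℤ → ℕ}
    (hdig : ∀ k, ε k ≤ 1) (hnocons : ∀ k, ¬(ε k = 1 ∧ ε (k + 1) = 1)) (m M : ℤ) :
    ∑ k ∈ Icc m M, (ε k : ℝ) * x ^ (-k) < x ^ (1 - m) := by
  have key := sum_Icc_digit_mul_zpow_lt hx hx2 (ε := fun k => ε (-k)) (fun k => hdig _)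
    (fun k h => hnocons (-(k + 1)) ⟨h.2, by rw [show -(k + 1) + 1 = -k by ring]; exact h.1⟩)
    (-M) (-m)
  rw [neg_add_eq_sub] at key
  refine lt_of_eq_of_lt (sum_nbij' (fun k => -k) (fun k => -k) ?_ ?_ ?_ ?_ ?_) key <;>
    grind

theorem abs_sum_Icc_digit_mul_goldenConj_zpow_lt {ε : ℤ → ℕ} (hdig : ∀ k, ε k ≤ 1)
    (hnocons : ∀ k, ¬(ε k = 1 ∧ ε (k + 1) = 1)) (m M : ℤ) :
    |∑ k ∈ Icc m M, (ε k : ℝ) * ψ ^ k| < φ ^ (1 - m) :=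
  calc |∑ k ∈ Icc m M, (ε k : ℝ) * ψ ^ k|
      ≤ ∑ k ∈ Icc m M, |(ε k : ℝ) * ψ ^ k| := abs_sum_le_sum_abs _ _
    _ = ∑ k ∈ Icc m M, (ε k : ℝ) * φ ^ (-k) := by
        refine sum_congr rfl fun k _ => ?_
        rw [abs_mul, Nat.abs_cast, abs_zpow, abs_of_neg goldenConj_neg, ← inv_goldenRatio,
          inv_zpow', zpow_neg]
    _ < φ ^ (1 - m) :=
        sum_Icc_digit_mul_zpow_neg_lt one_lt_goldenRatio goldenRatio_sq.ge hdig hnocons m M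

theorem exists_int_zpow_eq_of_sq_eq_add_one (k : ℤ) :
    ∃ a b : ℤ, ∀ x : ℝ, x ^ 2 = x + 1 → x ^ k = a + b * x := by
  induction k using Int.induction_on with
  | zero => exact ⟨1, 0, fun x _ => by simp⟩
  | succ k ih =>
    obtain ⟨a, b, h⟩ := ih
    refine ⟨b, a + b, fun x hx => ?_⟩
    have hx0 : x ≠ 0 := by rintro rfl; norm_num at hx
    rw [zpow_add_one₀ hx0, h x hx]
    push_cast
    linear_combination b * hx
  | pred k ih =>
    obtain ⟨a, b, h⟩ := ih
    refine ⟨b - a, a, fun x hx => ?_⟩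
    have hx0 : x ≠ 0 := by rintro rfl; norm_num at hx
    have hinv : x⁻¹ = x - 1 := inv_eq_of_mul_eq_one_right (by linear_combination hx)
    rw [zpow_sub_one₀ hx0, h x hx, hinv]
    push_cast
    linear_combination b * hx

theorem exists_int_sum_mul_zpow_eq_of_sq_eq_add_one (s : Finset ℤ) (c : ℤ → ℤ) :
    ∃ a b : ℤ, ∀ x : ℝ, x ^ 2 = x + 1 → ∑ k ∈ s, (c k : ℝ) * x ^ k = a + b * x := by
  choose a b h using exists_int_zpow_eq_of_sq_eq_add_one
  refine ⟨∑ k ∈ s, c k * a k, ∑ k ∈ s, c k * b k, fun x hx => ?_⟩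
  push_cast
  rw [sum_mul, ← sum_add_distrib]
  exact sum_congr rfl fun k _ => by rw [h k x hx]; ring

theorem sum_mul_goldenConj_zpow_eq_of_sum_mul_goldenRatio_zpow_eq_intCast (s : Finset ℤ)
    (c : ℤ → ℤ) (n : ℤ) (h : ∑ k ∈ s, (c k : ℝ) * φ ^ k = n) :
    ∑ k ∈ s, (c k : ℝ) * ψ ^ k = n := by
  obtain ⟨a, b, hab⟩ := exists_int_sum_mul_zpow_eq_of_sq_eq_add_one s c
  rw [hab φ goldenRatio_sq] at h
  have hb : b = 0 := by
    by_contra hb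
    exact ((goldenRatio_irrational.intCast_mul hb).intCast_add a).ne_int n h
  rw [hab ψ goldenConj_sq, hb]
  simpa [hb] using h

theorem goldenRatio_zpow_add_one (k : ℤ) : φ ^ (k + 1) = φ ^ k + φ ^ (k - 1) := by
  rw [zpow_add_one₀ goldenRatio_ne_zero, zpow_sub_one₀ goldenRatio_ne_zero, inv_goldenRatio]
  linear_combination φ ^ k * goldenRatio_add_goldenConj

theorem even_and_mem_Ioo_of_eq_sum_Icc_digit_mul_goldenConj_zpow {ε : ℤ → ℕ}
    (hdig : ∀ k, ε k ≤ 1) (hnocons : ∀ k, ¬(ε k = 1 ∧ ε (k + 1) = 1)) {R L : ℕ} (hR : 0 < R)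
    (hbot : ε (-R) = 1) {y : ℝ} (hy : 0 ≤ y)
    (h : y = ∑ k ∈ Icc (-(R : ℤ)) L, (ε k : ℝ) * ψ ^ k) :
    Even R ∧ y ∈ Set.Ioo (φ ^ ((R : ℤ) - 1)) (φ ^ ((R : ℤ) + 1)) := by
  have hnext : ε (-R + 1) = 0 := by have := hdig (-R + 1); have := hnocons (-R); omega
  have peel : ∀ {m : ℤ} (f : ℤ → ℝ), m ≤ L →
      ∑ k ∈ Icc m L, f k = f m + ∑ k ∈ Icc (m + 1) L, f k := fun f hm => by
    rw [Icc_add_one_left_eq_Ioc, add_sum_Ioc_eq_sum_Icc hm]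
  set T := ∑ k ∈ Icc (-(R : ℤ) + 2) L, (ε k : ℝ) * ψ ^ k
  have hT : |T| < φ ^ ((R : ℤ) - 1) := by
    have := abs_sum_Icc_digit_mul_goldenConj_zpow_lt hdig hnocons (-R + 2) L
    rwa [show 1 - (-(R : ℤ) + 2) = R - 1 by ring] at this
  have hyT : y = (-φ) ^ R + T := by
    rw [h, peel _ (by omega), peel _ (by omega), hbot, hnext, add_assoc, one_add_one_eq_two]
    rw [zpow_neg, zpow_natCast, ← inv_pow, inv_goldenConj]
    push_cast
    ring
  have hR_even : Even R := by
    by_contra hodd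
    rw [Nat.not_even_iff_odd.mp hodd |>.neg_pow] at hyT
    have := zpow_lt_zpow_right₀ one_lt_goldenRatio (by omega : (R : ℤ) - 1 < R)
    rw [zpow_natCast] at this
    linarith [(abs_lt.mp hT).2]
  rw [hR_even.neg_pow, ← zpow_natCast] at hyT
  refine ⟨hR_even, ?_, ?_⟩
  · have hsplit := peel (fun k => (ε k : ℝ) * ψ ^ k)
      (by obtain ⟨r, rfl⟩ := hR_even; omega : -(R : ℤ) + 2 ≤ L)
    have hT' := abs_sum_Icc_digit_mul_goldenConj_zpow_lt hdig hnocons (-R + 2 + 1) L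
    rw [show 1 - (-(R : ℤ) + 2 + 1) = R - 2 by ring] at hT'
    have hψ_nonneg : 0 ≤ (ε (-R + 2) : ℝ) * ψ ^ (-(R : ℤ) + 2) :=
      mul_nonneg (Nat.cast_nonneg _) (Even.zpow_nonneg (by simpa [parity_simps] using hR_even) _)
    have hfib := goldenRatio_zpow_add_one (R - 1)
    rw [sub_add_cancel, sub_sub, one_add_one_eq_two] at hfib
    linarith [(abs_lt.mp hT').1]
  · rw [goldenRatio_zpow_add_one]
    linarith [(abs_lt.mp hT).2]

theorem golden_fractional_length_general (n : ℕ) (L R : ℕ) (ε : ℤ → ℕ)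
    (hdig : ∀ k, ε k ≤ 1)
    (hnocons : ∀ k, ¬(ε k = 1 ∧ ε (k + 1) = 1))
    (htop : ε (L : ℤ) = 1)
    (hbot : 0 < R → ε (-(R : ℤ)) = 1)
    (hsum : (n : ℝ) = ∑ k ∈ Finset.Icc (-(R : ℤ)) (L : ℤ), (ε k : ℝ) * goldenφ ^ k) :
    (Even L → R = L) ∧ (Odd L → R = L + 1) := by
  have hφ : goldenφ = φ := rfl
  rw [hφ] at hsum
  have hconj : (n : ℝ) = ∑ k ∈ Icc (-(R : ℤ)) L, (ε k : ℝ) * ψ ^ k := by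
    have := sum_mul_goldenConj_zpow_eq_of_sum_mul_goldenRatio_zpow_eq_intCast _ (fun k => ε k) n
      (by simpa using hsum.symm)
    simpa using this.symm
  have hlow : φ ^ (L : ℤ) ≤ n := by
    rw [hsum]
    simpa [htop] using single_le_sum (f := fun k => (ε k : ℝ) * φ ^ k)
      (fun k _ => by positivity) (mem_Icc.mpr ⟨(by omega : -(R : ℤ) ≤ L), le_rfl⟩)
  have hhigh : (n : ℝ) < φ ^ ((L : ℤ) + 1) :=
    hsum ▸ sum_Icc_digit_mul_zpow_lt one_lt_goldenRatio goldenRatio_sq.ge hdig hnocons _ _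
  rcases Nat.eq_zero_or_pos R with rfl | hR
  · have hconj_lt := abs_sum_Icc_digit_mul_goldenConj_zpow_lt hdig hnocons 0 L
    rw [Int.natCast_zero, neg_zero] at hconj
    rw [← hconj, sub_zero, Nat.abs_cast] at hconj_lt
    have hL : (L : ℤ) < 1 :=
      (zpow_lt_zpow_iff_right₀ one_lt_goldenRatio).mp (hlow.trans_lt hconj_lt)
    simp [show L = 0 by omega]
  · obtain ⟨hR_even, hlo, hhi⟩ := even_and_mem_Ioo_of_eq_sum_Icc_digit_mul_goldenConj_zpow
      hdig hnocons hR (hbot hR) n.cast_nonneg hconj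
    have hLR : (L : ℤ) < R + 1 :=
      (zpow_lt_zpow_iff_right₀ one_lt_goldenRatio).mp (hlow.trans_lt hhi)
    have hRL : (R : ℤ) - 1 < L + 1 :=
      (zpow_lt_zpow_iff_right₀ one_lt_goldenRatio).mp (hlo.trans hhigh)
    rw [Nat.even_iff] at hR_even
    rw [Nat.even_iff, Nat.odd_iff]
    omega

/-- For the greedy φ-expansion n = Σ_{k=-R}^{L} ε_k φ^k of a positive integer n,
with digits in {0,1}, no two consecutive 1s, leading digit ε_L = 1 and last digit
ε_{-R} = 1 (when R > 0): R = L if L is even and R = L + 1 if L is odd. -/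
theorem golden_fractional_length (n : ℕ) (hn : 0 < n) (L R : ℕ) (ε : ℤ → ℕ)
    (hdig : ∀ k, ε k ≤ 1)
    (hsupp : ∀ k, ε k ≠ 0 → -(R : ℤ) ≤ k ∧ k ≤ (L : ℤ))
    (hnocons : ∀ k, ¬(ε k = 1 ∧ ε (k + 1) = 1))
    (htop : ε (L : ℤ) = 1)
    (hbot : 0 < R → ε (-(R : ℤ)) = 1)
    (hsum : (n : ℝ) = ∑ k ∈ Finset.Icc (-(R : ℤ)) (L : ℤ), (ε k : ℝ) * goldenφ ^ k) :
    (Even L → R = L) ∧ (Odd L → R = L + 1) :=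
  golden_fractional_length_general n L R ε hdig hnocons htop hbot hsum
end

section
/- Let A be a finite alphabet, μ a shift-invariant probability measure on A^ℕ, and let (v_i) and (w_i) be sequences of finite words over A with ‖v_i‖ = ‖w_i‖ for all i, ‖v_i‖ → ∞, such that both infinite words v = v_1 v_2 v_3 ... and w = w_1 w_2 w_3 ... are μ-normal, and moreover ‖v_{N+1}‖ / (‖v_1‖ + ... + ‖v_N‖) → 0 and N / (‖v_1‖ + ... + ‖v_N‖) → 0 as N → ∞. Then the interleaved word u = v_1 w_1 v_2 w_2 v_3 w_3 ... is μ-normal. -/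
open Filter MeasureTheory

/-- Number of occurrences of the pattern `d` starting within the first `n`
letters of the infinite word `ω`. -/
def occCount {A : Type*} [DecidableEq A] (d : List A) (ω : ℕ → A) (n : ℕ) : ℕ :=
  ((Finset.range n).filter
    (fun i => List.ofFn (fun j : Fin d.length => ω (i + (j : ℕ))) = d)).card

/-- The cylinder set of infinite words starting with the finite word `d`. -/
def cylinder {A : Type*} (d : List A) : Set (ℕ → A) :=
  {ω | List.ofFn (fun j : Fin d.length => ω (j : ℕ)) = d}

/-- An infinite word is μ-normal if every finite pattern occurs with asymptotic
frequency the μ-measure of its cylinder. -/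
def IsMuNormal {A : Type*} [DecidableEq A] [MeasurableSpace A]
    (μ : Measure (ℕ → A)) (ω : ℕ → A) : Prop :=
  ∀ d : List A,
    Tendsto (fun n => (occCount d ω n : ℝ) / n) atTop
      (nhds (μ (cylinder d)).toReal)

/-- `ω` is the infinite concatenation of the finite words `v 0, v 1, v 2, ...`. -/
def IsConcat {A : Type*} (v : ℕ → List A) (ω : ℕ → A) : Prop :=
  ∀ N j, j < ∑ i ∈ Finset.range N, (v i).length →
    ((List.range N).map v).flatten[j]? = some (ω j)

/-!
Up to position `2 S_N`, where `S_N = ‖v_0‖ + ⋯ + ‖v_{N-1}‖`, the word `u` consists of the first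
`S_N` letters of `V` and the first `S_N` letters of `W`, each cut into `N` blocks, the blocks
alternating. Cutting a word at a point changes the number of occurrences of `d` by at most `‖d‖`,
so along the checkpoints `2 S_N` the frequency of `d` in `u` is the mean of its frequencies in
`V` and `W` up to an error `‖d‖ N / S_N → 0`. Since `S_{N+1} / S_N → 1` and occurrence counts
are monotone, convergence along these checkpoints gives convergence along all of `ℕ`.
-/

open Finset
open scoped Topology

section Counting

variable {A : Type*} [DecidableEq A] (d : List A)

lemma occCount_add (ω : ℕ → A) (a m : ℕ) :
    occCount d ω (a + m) = occCount d ω a + occCount d (fun i => ω (a + i)) m := by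
  simp only [occCount, card_filter, sum_range_add, add_assoc]

lemma occCount_le (ω : ℕ → A) (n : ℕ) : occCount d ω n ≤ n :=
  (card_filter_le _ _).trans (card_range n).le

lemma occCount_mono (ω : ℕ → A) : Monotone (occCount d ω) := fun _ _ h =>
  card_le_card (filter_subset_filter _ (range_subset_range.2 h))

lemma occCount_le_add_length_of_eq {ω₁ ω₂ : ℕ → A} {m : ℕ} (h : ∀ i < m, ω₁ i = ω₂ i) :
    occCount d ω₁ m ≤ occCount d ω₂ m + d.length := by
  rcases le_or_gt m d.length with hm | hm
  · exact (occCount_le d ω₁ m).trans (hm.trans (Nat.le_add_left _ _))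
  obtain ⟨m, rfl⟩ : ∃ m', m = m' + d.length := ⟨m - d.length, by omega⟩
  have hprefix : occCount d ω₁ m = occCount d ω₂ m := by
    refine congrArg card (filter_congr fun i hi => ?_)
    rw [mem_range] at hi
    rw [show (fun j : Fin d.length => ω₁ (i + j)) = fun j : Fin d.length => ω₂ (i + j) from
      funext fun j => h _ (by omega)]
  calc occCount d ω₁ (m + d.length)
      = occCount d ω₁ m + occCount d (fun i => ω₁ (m + i)) d.length := occCount_add ..
    _ ≤ occCount d ω₂ m + d.length := by rw [hprefix]; gcongr; exact occCount_le ..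
    _ ≤ occCount d ω₂ (m + d.length) + d.length := by
      gcongr; exact occCount_mono d ω₂ (Nat.le_add_right _ _)

lemma abs_occCount_sub_le_of_eq {ω₁ ω₂ : ℕ → A} {m : ℕ} (h : ∀ i < m, ω₁ i = ω₂ i) :
    |(occCount d ω₁ m : ℝ) - occCount d ω₂ m| ≤ d.length := by
  rw [abs_sub_le_iff, sub_le_iff_le_add', sub_le_iff_le_add']
  exact ⟨mod_cast occCount_le_add_length_of_eq d h,
    mod_cast occCount_le_add_length_of_eq d fun i hi => (h i hi).symm⟩

end Counting

section Concat

variable {A : Type*}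

def prefixLength (v : ℕ → List A) (N : ℕ) : ℕ := ∑ i ∈ range N, (v i).length

lemma prefixLength_succ (v : ℕ → List A) (N : ℕ) :
    prefixLength v (N + 1) = prefixLength v N + (v N).length :=
  sum_range_succ _ _

lemma IsConcat.apply_prefixLength_add {v : ℕ → List A} {ω : ℕ → A} (hω : IsConcat v ω)
    {N t : ℕ} (ht : t < (v N).length) : ω (prefixLength v N + t) = (v N)[t] := by
  have hflatten : ((List.range (N + 1)).map v).flatten = ((List.range N).map v).flatten ++ v N := by
    simp [List.range_succ]
  have hprefix : ((List.range N).map v).flatten.length = prefixLength v N := by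
    rw [List.length_flatten, List.map_map]
    rfl
  have := hω (N + 1) (prefixLength v N + t) (by rw [← prefixLength, prefixLength_succ]; omega)
  rw [hflatten, List.getElem?_append_right (by omega), hprefix, Nat.add_sub_cancel_left,
    List.getElem?_eq_getElem ht] at this
  exact (Option.some.inj this).symm

end Concat

section Interleave

variable {A : Type*} {v w : ℕ → List A} {V W u : ℕ → A}

lemma prefixLength_interleave (hlen : ∀ i, (v i).length = (w i).length) (N : ℕ) :
    prefixLength (fun i => v i ++ w i) N = 2 * prefixLength v N := by
  simp only [prefixLength, List.length_append, ← hlen, sum_add_distrib, two_mul]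

lemma interleave_apply_left (hlen : ∀ i, (v i).length = (w i).length) (hV : IsConcat v V)
    (hu : IsConcat (fun i => v i ++ w i) u) {N t : ℕ} (ht : t < (v N).length) :
    u (2 * prefixLength v N + t) = V (prefixLength v N + t) := by
  rw [← prefixLength_interleave hlen, hu.apply_prefixLength_add (by simp; omega),
    hV.apply_prefixLength_add ht, List.getElem_append_left ht]

lemma interleave_apply_right (hlen : ∀ i, (v i).length = (w i).length) (hW : IsConcat w W)
    (hu : IsConcat (fun i => v i ++ w i) u) {N t : ℕ} (ht : t < (v N).length) :
    u (2 * prefixLength v N + (v N).length + t) = W (prefixLength v N + t) := by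
  have hprefix : prefixLength w N = prefixLength v N := sum_congr rfl fun i _ => (hlen i).symm
  rw [← prefixLength_interleave hlen, add_assoc, hu.apply_prefixLength_add (by simp [← hlen, ht]),
    ← hprefix, hW.apply_prefixLength_add (hlen N ▸ ht), List.getElem_append_right (by omega)]
  simp

lemma abs_occCount_interleave_sub_le [DecidableEq A] (d : List A)
    (hlen : ∀ i, (v i).length = (w i).length) (hV : IsConcat v V) (hW : IsConcat w W)
    (hu : IsConcat (fun i => v i ++ w i) u) (N : ℕ) :
    |(occCount d u (2 * prefixLength v N) : ℝ) -
        (occCount d V (prefixLength v N) + occCount d W (prefixLength v N))| ≤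
      2 * d.length * N := by
  induction N with
  | zero => simp [prefixLength, occCount]
  | succ N ih =>
    rw [prefixLength_succ]
    set S := prefixLength v N
    set L := (v N).length
    have hleft := abs_occCount_sub_le_of_eq d (ω₁ := fun i => u (2 * S + i))
      (ω₂ := fun i => V (S + i)) (m := L) fun i hi => interleave_apply_left hlen hV hu hi
    have hright := abs_occCount_sub_le_of_eq d (ω₁ := fun i => u (2 * S + L + i))
      (ω₂ := fun i => W (S + i)) (m := L) fun i hi => interleave_apply_right hlen hW hu hi
    rw [show 2 * (S + L) = 2 * S + L + L by ring, occCount_add,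
      occCount_add, occCount_add, occCount_add]
    push_cast
    calc _ = |(occCount d u (2 * S) - (occCount d V S + occCount d W S) : ℝ)
            + (occCount d (fun i => u (2 * S + i)) L - occCount d (fun i => V (S + i)) L)
            + (occCount d (fun i => u (2 * S + L + i)) L - occCount d (fun i => W (S + i)) L)| := by
          congr 1; ring
      _ ≤ 2 * d.length * N + d.length + d.length := (abs_add_three _ _ _).trans (by gcongr)
      _ = 2 * d.length * (N + 1) := by ring

lemma tendsto_occCount_interleave_div [DecidableEq A] (d : List A)
    (hlen : ∀ i, (v i).length = (w i).length) (hV : IsConcat v V) (hW : IsConcat w W)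
    (hu : IsConcat (fun i => v i ++ w i) u) {c : ℝ}
    (hVc : Tendsto (fun N => (occCount d V (prefixLength v N) : ℝ) / prefixLength v N) atTop (𝓝 c))
    (hWc : Tendsto (fun N => (occCount d W (prefixLength v N) : ℝ) / prefixLength v N) atTop (𝓝 c))
    (hblocks : Tendsto (fun N : ℕ => (N : ℝ) / prefixLength v N) atTop (𝓝 0)) :
    Tendsto (fun N => (occCount d u (2 * prefixLength v N) : ℝ) / (2 * prefixLength v N : ℕ))
      atTop (𝓝 c) := by
  have hmean : Tendsto (fun N => ((occCount d V (prefixLength v N) : ℝ) / prefixLength v N +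
      (occCount d W (prefixLength v N) : ℝ) / prefixLength v N) / 2) atTop (𝓝 c) := by
    simpa using (hVc.add hWc).div_const 2
  refine tendsto_of_tendsto_of_dist hmean (squeeze_zero (fun _ => dist_nonneg) (fun N => ?_)
    (by simpa using hblocks.const_mul (d.length : ℝ)))
  rw [Real.dist_eq, abs_sub_comm]
  push_cast
  calc _ = |(occCount d u (2 * prefixLength v N) : ℝ) -
        (occCount d V (prefixLength v N) + occCount d W (prefixLength v N))| /
          (2 * prefixLength v N) := by
        rw [← add_div, div_div, mul_comm _ (2 : ℝ), ← sub_div, abs_div, abs_mul, abs_two,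
          Nat.abs_cast]
    _ ≤ 2 * d.length * N / (2 * prefixLength v N) := by
        gcongr; exact abs_occCount_interleave_sub_le d hlen hV hW hu N
    _ = d.length * (N / prefixLength v N) := by ring

end Interleave

section Checkpoints

variable {A : Type*} {v : ℕ → List A}

lemma tendsto_prefixLength_atTop (h : Tendsto (fun i => (v i).length) atTop atTop) :
    Tendsto (prefixLength v) atTop atTop :=
  (tendsto_add_atTop_iff_nat 1).mp <|
    tendsto_atTop_mono (fun N => by rw [prefixLength_succ]; omega) h

lemma eventually_prefixLength_succ_le (htop : Tendsto (prefixLength v) atTop atTop)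
    (hratio : Tendsto (fun N => ((v N).length : ℝ) / prefixLength v N) atTop (𝓝 0))
    {a : ℝ} (ha : 1 < a) : ∀ᶠ N in atTop, (prefixLength v (N + 1) : ℝ) ≤ a * prefixLength v N := by
  filter_upwards [htop.eventually_gt_atTop 0, hratio.eventually (gt_mem_nhds (sub_pos.2 ha))]
    with N hpos hlt
  rw [div_lt_iff₀ (by positivity)] at hlt
  rw [prefixLength_succ]
  push_cast
  linarith

end Checkpoints

theorem interleave_of_normal_general {A : Type*} [DecidableEq A]
    [MeasurableSpace A] (μ : Measure (ℕ → A))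
    (v w : ℕ → List A)
    (hlen : ∀ i, (v i).length = (w i).length)
    (hlen_top : Tendsto (fun i => (v i).length) atTop atTop)
    (hratio1 : Tendsto
      (fun N : ℕ => ((v N).length : ℝ) / ∑ i ∈ Finset.range N, ((v i).length : ℝ))
      atTop (nhds 0))
    (hratio2 : Tendsto
      (fun N : ℕ => (N : ℝ) / ∑ i ∈ Finset.range N, ((v i).length : ℝ))
      atTop (nhds 0))
    (V W u : ℕ → A)
    (hV : IsConcat v V) (hW : IsConcat w W)
    (hVnorm : IsMuNormal μ V) (hWnorm : IsMuNormal μ W)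
    (hu : IsConcat (fun i => v i ++ w i) u) :
    IsMuNormal μ u := by
  intro d
  have hS := tendsto_prefixLength_atTop hlen_top
  simp only [← Nat.cast_sum] at hratio1 hratio2
  refine tendsto_div_of_monotone_of_exists_subseq_tendsto_div _ _
    (Nat.mono_cast.comp (occCount_mono d u)) fun a ha => ⟨fun N => 2 * prefixLength v N, ?_, ?_, ?_⟩
  · filter_upwards [eventually_prefixLength_succ_le hS hratio1 ha] with N hN
    push_cast
    linarith
  · exact tendsto_atTop_mono (fun N => Nat.le_mul_of_pos_left _ two_pos) hS
  · exact tendsto_occCount_interleave_div d hlen hV hW hu ((hVnorm d).comp hS)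
      ((hWnorm d).comp hS) hratio2

/-- Interleaving two μ-normal words built from blocks of equal lengths tending to
infinity (with the stated ratio conditions) yields a μ-normal word. -/
theorem interleave_of_normal {A : Type*} [Fintype A] [DecidableEq A]
    [MeasurableSpace A] (μ : Measure (ℕ → A)) [IsProbabilityMeasure μ]
    (hshift : MeasurePreserving (fun ω (n : ℕ) => ω (n + 1)) μ μ)
    (v w : ℕ → List A)
    (hlen : ∀ i, (v i).length = (w i).length)
    (hlen_top : Tendsto (fun i => (v i).length) atTop atTop)
    (hratio1 : Tendsto
      (fun N : ℕ => ((v N).length : ℝ) / ∑ i ∈ Finset.range N, ((v i).length : ℝ))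
      atTop (nhds 0))
    (hratio2 : Tendsto
      (fun N : ℕ => (N : ℝ) / ∑ i ∈ Finset.range N, ((v i).length : ℝ))
      atTop (nhds 0))
    (V W u : ℕ → A)
    (hV : IsConcat v V) (hW : IsConcat w W)
    (hVnorm : IsMuNormal μ V) (hWnorm : IsMuNormal μ W)
    (hu : IsConcat (fun i => v i ++ w i) u) :
    IsMuNormal μ u :=
  interleave_of_normal_general μ v w hlen hlen_top hratio1 hratio2 V W u hV hW hVnorm hWnorm hu
end

section
/- Let φ = (1+√5)/2. Every positive integer n has a finite greedy φ-expansion; that is, there exist integers L ≥ 0, R ≥ 0 and digits ε_k ∈ {0,1} for -R ≤ k ≤ L, with no two consecutive digits both equal to 1, such that n = Σ_{k=-R}^{L} ε_k φ^k. -/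
open Finset Real
open scoped goldenRatio

lemma goldenφ_eq_goldenRatio : goldenφ = φ := rfl

def NoConsecutive (S : Finset ℤ) : Prop := ∀ k ∈ S, k + 1 ∉ S

lemma NoConsecutive.mono {S T : Finset ℤ} (h : S ⊆ T) (hT : NoConsecutive T) :
    NoConsecutive S :=
  fun k hk hk1 => hT k (h hk) (h hk1)

lemma NoConsecutive.eq_insert_union_filter {S : Finset ℤ} (hS : NoConsecutive S) {m : ℤ}
    (hm : m ∈ S) : S = insert m ({k ∈ S | k ≤ m - 2} ∪ {k ∈ S | m + 2 ≤ k}) := by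
  ext k
  simp only [mem_insert, mem_union, mem_filter]
  constructor
  · intro hk
    have : k + 1 ≠ m := fun h => hS k hk (h ▸ hm)
    have : k ≠ m + 1 := fun h => hS m hm (h ▸ hk)
    simp only [hk, true_and]
    omega
  · rintro (rfl | ⟨hk, -⟩ | ⟨hk, -⟩) <;> assumption

lemma goldenRatio_zpow_add_two (k : ℤ) : φ ^ (k + 2) = φ ^ (k + 1) + φ ^ k := by
  have hsq : φ ^ (2 : ℤ) = φ + 1 := by exact_mod_cast goldenRatio_sq
  rw [zpow_add₀ goldenRatio_ne_zero, zpow_add_one₀ goldenRatio_ne_zero, hsq]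
  ring

lemma two_mul_goldenRatio_zpow (m : ℤ) : 2 * φ ^ m = φ ^ (m + 1) + φ ^ (m - 2) := by
  have h₁ := goldenRatio_zpow_add_two (m - 2)
  have h₂ := goldenRatio_zpow_add_two (m - 1)
  rw [sub_add_cancel, show m - 2 + 1 = m - 1 by ring] at h₁
  rw [show m - 1 + 2 = m + 1 by ring, sub_add_cancel] at h₂
  linarith

lemma sum_goldenRatio_zpow_lt {S : Finset ℤ} (hS : NoConsecutive S) {u : ℤ}
    (hu : ∀ k ∈ S, k ≤ u) : ∑ k ∈ S, φ ^ k < φ ^ (u + 1) := by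
  induction S using Finset.induction_on_max generalizing u with
  | empty => simpa using zpow_pos goldenRatio_pos (u + 1)
  | insert a s hlt ih =>
    have hs : ∀ k ∈ s, k ≤ a - 2 := fun k hk => by
      have := hlt k hk
      have : k + 1 ≠ a := fun h => hS k (mem_insert_of_mem hk) (h ▸ mem_insert_self a s)
      omega
    have hsum := ih (hS.mono (subset_insert a s)) hs
    have hrec := goldenRatio_zpow_add_two (a - 1)
    rw [sub_add_cancel, show a - 1 + 2 = a + 1 by ring] at hrec
    rw [show a - 2 + 1 = a - 1 by ring] at hsum
    calc ∑ k ∈ insert a s, φ ^ k = φ ^ a + ∑ k ∈ s, φ ^ k :=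
          sum_insert fun h => (hlt a h).false
      _ < φ ^ (a + 1) := by linarith
      _ ≤ φ ^ (u + 1) := zpow_le_zpow_right₀ one_lt_goldenRatio.le
          (by linarith [hu a (mem_insert_self a s)])

lemma exists_sum_goldenRatio_zpow_eq_add (m : ℤ) {S : Finset ℤ} (hS : NoConsecutive S) :
    ∃ T : Finset ℤ, ∑ k ∈ T, φ ^ k = φ ^ m + ∑ k ∈ S, φ ^ k := by
  induction S using Finset.strongInduction generalizing m with
  | H S ih =>
  by_cases hm : m ∈ S
  swap
  · exact ⟨insert m S, sum_insert hm⟩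
  set A := {k ∈ S | k ≤ m - 2}
  set B := {k ∈ S | m + 2 ≤ k}
  have hS_eq : S = insert m (A ∪ B) := hS.eq_insert_union_filter hm
  have hAB : Disjoint A B := disjoint_filter.2 fun k _ h₁ h₂ => by omega
  have hA_nc : NoConsecutive A := hS.mono (filter_subset _ _)
  obtain ⟨A', hA'⟩ := ih A (filter_ssubset.2 ⟨m, hm, by omega⟩) (m - 2) hA_nc
  have hA'_lt : ∀ k ∈ A', k < m := by
    intro k hk
    by_contra! hmk
    have hA : ∑ k ∈ A, φ ^ k < φ ^ (m - 2 + 1) :=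
      sum_goldenRatio_zpow_lt hA_nc fun k hk => (mem_filter.1 hk).2
    have hrec := goldenRatio_zpow_add_two (m - 2)
    rw [sub_add_cancel] at hrec
    have := single_le_sum (fun j _ => (zpow_pos goldenRatio_pos j).le) hk
    have := zpow_le_zpow_right₀ one_lt_goldenRatio.le hmk
    linarith
  have hA'B : Disjoint A' B :=
    disjoint_left.2 fun k hk hkB => by
      have := hA'_lt k hk
      have := (mem_filter.1 hkB).2
      omega
  have hm1 : m + 1 ∉ A' ∪ B := by
    simp only [mem_union, not_or]
    exact ⟨fun h => by have := hA'_lt _ h; omega, fun h => by have := (mem_filter.1 h).2; omega⟩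
  refine ⟨insert (m + 1) (A' ∪ B), ?_⟩
  rw [sum_insert hm1, sum_union hA'B, hA', hS_eq, sum_insert (by simp [A, B]), sum_union hAB]
  linarith [two_mul_goldenRatio_zpow m]

lemma exists_noConsecutive_sum_goldenRatio_zpow_eq (S : Finset ℤ) :
    ∃ T, NoConsecutive T ∧ ∑ k ∈ T, φ ^ k = ∑ k ∈ S, φ ^ k := by
  induction hn : #S using Nat.strong_induction_on generalizing S with
  | _ n ih =>
  by_cases hS : NoConsecutive S
  · exact ⟨S, hS, rfl⟩
  have hne : {k ∈ S | k + 1 ∈ S}.Nonempty := by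
    simpa [NoConsecutive, Finset.Nonempty] using hS
  -- The topmost consecutive pair is merged, so that `k + 2` is free.
  set k := max' _ hne
  obtain ⟨hk, hk1⟩ := mem_filter.1 (max'_mem _ hne)
  have hk2 : k + 2 ∉ S := fun h =>
    (le_max' _ (k + 1) (mem_filter.2 ⟨hk1, by rwa [add_assoc]⟩)).not_gt (lt_add_one k)
  have hkS' : k + 1 ∈ S.erase k := mem_erase.2 ⟨by omega, hk1⟩
  set R := (S.erase k).erase (k + 1)
  have hk2R : k + 2 ∉ R := fun h => hk2 (mem_of_mem_erase (mem_of_mem_erase h))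
  have hcard : #R + 1 < n := by
    have := card_pos.2 ⟨_, hkS'⟩
    rw [card_erase_of_mem hkS', card_erase_of_mem hk] at *
    omega
  obtain ⟨T, hT, hTR⟩ := ih _ hcard (insert (k + 2) R) (card_insert_of_notMem hk2R)
  refine ⟨T, hT, ?_⟩
  rw [hTR, sum_insert hk2R, ← add_sum_erase _ _ hk, ← add_sum_erase _ _ hkS',
    goldenRatio_zpow_add_two]
  ring

lemma exists_noConsecutive_sum_goldenRatio_zpow_eq_natCast (n : ℕ) :
    ∃ T, NoConsecutive T ∧ ∑ k ∈ T, φ ^ k = n := by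
  induction n with
  | zero => exact ⟨∅, fun k hk => absurd hk (notMem_empty k), by simp⟩
  | succ n ih =>
    obtain ⟨S, hS, hSn⟩ := ih
    obtain ⟨S', hS'⟩ := exists_sum_goldenRatio_zpow_eq_add 0 hS
    obtain ⟨T, hT, hTS'⟩ := exists_noConsecutive_sum_goldenRatio_zpow_eq S'
    refine ⟨T, hT, ?_⟩
    rw [hTS', hS', hSn, zpow_zero]
    push_cast
    ring

lemma Finset.exists_subset_Icc_neg (S : Finset ℤ) : ∃ N : ℕ, S ⊆ Icc (-(N : ℤ)) N := by
  refine ⟨∑ k ∈ S, k.natAbs, fun k hk => ?_⟩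
  have : k.natAbs ≤ ∑ j ∈ S, j.natAbs := single_le_sum (fun j _ => Nat.zero_le _) hk
  rw [mem_Icc]
  omega

theorem golden_finite_expansion_general (n : ℕ) :
    ∃ (L R : ℕ) (ε : ℤ → ℕ),
      (∀ k, ε k ≤ 1) ∧
      (∀ k, ¬(ε k = 1 ∧ ε (k + 1) = 1)) ∧
      (n : ℝ) = ∑ k ∈ Finset.Icc (-(R : ℤ)) (L : ℤ), (ε k : ℝ) * goldenφ ^ k := by
  obtain ⟨T, hT, hTn⟩ := exists_noConsecutive_sum_goldenRatio_zpow_eq_natCast n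
  obtain ⟨N, hN⟩ := T.exists_subset_Icc_neg
  refine ⟨N, N, fun k => if k ∈ T then 1 else 0, fun _ => ite_le_one le_rfl zero_le_one, ?_, ?_⟩
  · rintro k ⟨hk, hk1⟩
    exact hT k (by simpa using hk) (by simpa using hk1)
  · simp only [goldenφ_eq_goldenRatio, Nat.cast_ite, Nat.cast_one, Nat.cast_zero, ite_mul,
      one_mul, zero_mul, sum_ite_mem, inter_eq_right.2 hN, hTn]

/-- Every positive integer has a finite greedy φ-expansion: digits in {0,1},
no two consecutive digits equal to 1, n = Σ_{k=-R}^{L} ε_k φ^k. -/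
theorem golden_finite_expansion (n : ℕ) (hn : 0 < n) :
    ∃ (L R : ℕ) (ε : ℤ → ℕ),
      (∀ k, ε k ≤ 1) ∧
      (∀ k, ¬(ε k = 1 ∧ ε (k + 1) = 1)) ∧
      (n : ℝ) = ∑ k ∈ Finset.Icc (-(R : ℤ)) (L : ℤ), (ε k : ℝ) * goldenφ ^ k :=
  golden_finite_expansion_general n
end
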